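/- Let n ≥ 2. In the cyclotomic KLR algebra R_n, the set {e(i) : i ∈ I_n, e(i) ≠ 0} is a complete set of primitive pairwise orthogonal idempotents: the elements e(i) are idempotent, pairwise orthogonal (e(i)e(j) = 0 for i ≠ j), their sum equals 1, and each nonzero e(i) is primitive, i.e. it cannot be written as f₁ + f₂ with f₁, f₂ nonzero idempotents of R_n satisfying f₁f₂ = f₂f₁ = 0. -/

import Mathlib

open scoped BigOperators

/-- `I_n`: the sequences `(i_1,…,i_n)` of elements of `ZMod n` that are permutations of
`(0,1,…,n−1)`, encoded as bijections `Fin n → ZMod n` (position `k : Fin n` is the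
0-based version of the paper's position `k+1`). -/
def KLRSeq (n : ℕ) : Type := {f : Fin n → ZMod n // Function.Bijective f}

instance (n : ℕ) : Finite (KLRSeq n) := by
  unfold KLRSeq
  rcases Nat.eq_zero_or_pos n with h | h
  · subst h
    have : IsEmpty {f : Fin 0 → ZMod 0 // Function.Bijective f} := by
      constructor
      rintro ⟨f, hf⟩
      obtain ⟨x, -⟩ := hf.2 0
      exact x.elim0
    infer_instance
  · haveI : NeZero n := ⟨by omega⟩
    infer_instance

noncomputable instance (n : ℕ) : Fintype (KLRSeq n) := Fintype.ofFinite _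

noncomputable instance (n : ℕ) : DecidableEq (KLRSeq n) := Classical.decEq _

/-- Generators of the KLR algebra: idempotents `e(i)`, dots `y_k`, crossings `ψ_k`. -/
inductive KLRGen (n : ℕ) : Type
  | e : KLRSeq n → KLRGen n
  | y : Fin n → KLRGen n
  | psi : Fin (n - 1) → KLRGen n

/-- The free algebra on the KLR generators. -/
abbrev KLRFree (K : Type) [Field K] (n : ℕ) := FreeAlgebra K (KLRGen n)

namespace KLR

/-- `e(i)` in the free algebra. -/
def E (K : Type) [Field K] {n : ℕ} (i : KLRSeq n) : KLRFree K n :=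
  FreeAlgebra.ι K (KLRGen.e i)

/-- `y_k` in the free algebra. -/
def Y (K : Type) [Field K] {n : ℕ} (k : Fin n) : KLRFree K n :=
  FreeAlgebra.ι K (KLRGen.y k)

/-- `ψ_k` in the free algebra. -/
def P (K : Type) [Field K] {n : ℕ} (k : Fin (n - 1)) : KLRFree K n :=
  FreeAlgebra.ι K (KLRGen.psi k)

/-- The first strand position crossed by `ψ_k`. -/
def pos0 {n : ℕ} (k : Fin (n - 1)) : Fin n := ⟨k.val, by have := k.isLt; omega⟩

/-- The second strand position crossed by `ψ_k`. -/
def pos1 {n : ℕ} (k : Fin (n - 1)) : Fin n := ⟨k.val + 1, by have := k.isLt; omega⟩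

/-- The sequence `s_k · i`, with entries `k` and `k+1` swapped. -/
def swapSeq {n : ℕ} (k : Fin (n - 1)) (i : KLRSeq n) : KLRSeq n :=
  ⟨i.1 ∘ Equiv.swap (pos0 k) (pos1 k), i.2.comp (Equiv.swap _ _).bijective⟩

/-- The right-hand side of the quadratic relation `ψ_k² e(i) = …`, depending on how the
colors `i_k` and `i_{k+1}` are related in the quiver of affine type A on `ZMod n`
(`a → b` iff `b = a + 1` and `a ≠ b + 1`, etc.). -/
noncomputable def quadTerm (K : Type) [Field K] {n : ℕ} (k : Fin (n - 1)) (i : KLRSeq n) :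
    KLRFree K n :=
  let a := i.1 (pos0 k)
  let b := i.1 (pos1 k)
  if b = a + 1 ∧ a = b + 1 then
    (Y K (pos1 k) - Y K (pos0 k)) * ((Y K (pos0 k) - Y K (pos1 k)) * E K i)
  else if b = a + 1 ∧ a ≠ b + 1 then (Y K (pos1 k) - Y K (pos0 k)) * E K i
  else if a = b + 1 ∧ b ≠ a + 1 then (Y K (pos0 k) - Y K (pos1 k)) * E K i
  else E K i

/-- The defining relations of the cyclotomic KLR algebra `R_n` (for `Λ = Λ_0`):
the KLR relations together with the cyclotomic relations `y_1 e(i) = 0` (if `i_1 = 0`) and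
`e(i) = 0` (if `i_1 ≠ 0`). -/
inductive Rel (K : Type) [Field K] (n : ℕ) : KLRFree K n → KLRFree K n → Prop
  | idem (i j : KLRSeq n) : Rel K n (E K i * E K j) (if i = j then E K i else 0)
  | sum_eq_one : Rel K n (∑ i : KLRSeq n, E K i) 1
  | ye (k : Fin n) (i : KLRSeq n) : Rel K n (Y K k * E K i) (E K i * Y K k)
  | psie (k : Fin (n - 1)) (i : KLRSeq n) :
      Rel K n (P K k * E K i) (E K (swapSeq k i) * P K k)
  | yy (k l : Fin n) : Rel K n (Y K k * Y K l) (Y K l * Y K k)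
  | psiy (k : Fin (n - 1)) (l : Fin n) (h : l.val ≠ k.val ∧ l.val ≠ k.val + 1) :
      Rel K n (P K k * Y K l) (Y K l * P K k)
  | psipsi (k l : Fin (n - 1)) (h : k.val + 1 < l.val ∨ l.val + 1 < k.val) :
      Rel K n (P K k * P K l) (P K l * P K k)
  | psiy1 (k : Fin (n - 1)) (i : KLRSeq n) :
      Rel K n (P K k * (Y K (pos1 k) * E K i)) (Y K (pos0 k) * (P K k * E K i))
  | ypsi (k : Fin (n - 1)) (i : KLRSeq n) :
      Rel K n (Y K (pos1 k) * (P K k * E K i)) (P K k * (Y K (pos0 k) * E K i))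
  | sq (k : Fin (n - 1)) (i : KLRSeq n) :
      Rel K n (P K k * (P K k * E K i)) (quadTerm K k i)
  | braid (k : Fin (n - 1)) (h : k.val + 1 < n - 1) (i : KLRSeq n) :
      Rel K n (P K k * (P K ⟨k.val + 1, h⟩ * (P K k * E K i)))
              (P K ⟨k.val + 1, h⟩ * (P K k * (P K ⟨k.val + 1, h⟩ * E K i)))
  | cyc0 (hn : 0 < n) (i : KLRSeq n) (h : i.1 ⟨0, hn⟩ = 0) :
      Rel K n (Y K ⟨0, hn⟩ * E K i) 0
  | cyc1 (hn : 0 < n) (i : KLRSeq n) (h : i.1 ⟨0, hn⟩ ≠ 0) :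
      Rel K n (E K i) 0

end KLR

/-- The cyclotomic KLR algebra `R_n` (quiver of affine type A on `ZMod n`, `α` the sum of
all simple roots, `Λ = Λ_0`): the quotient of the free algebra on the generators by the
two-sided ideal generated by the relation differences and the cyclotomic generators. -/
abbrev CKLR (K : Type) [Field K] (n : ℕ) := RingQuot (KLR.Rel K n)

namespace KLR

/-- The quotient map from the free algebra to `R_n`. -/
noncomputable def mk (K : Type) [Field K] (n : ℕ) : KLRFree K n →ₐ[K] CKLR K n :=
  RingQuot.mkAlgHom K (Rel K n)

/-- The idempotent `e(i)` in `R_n`. -/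
noncomputable def e (K : Type) [Field K] {n : ℕ} (i : KLRSeq n) : CKLR K n := mk K n (E K i)

/-- The dot `y_k` in `R_n`. -/
noncomputable def y (K : Type) [Field K] {n : ℕ} (k : Fin n) : CKLR K n := mk K n (Y K k)

/-- The crossing `ψ_k` in `R_n`. -/
noncomputable def p (K : Type) [Field K] {n : ℕ} (k : Fin (n - 1)) : CKLR K n := mk K n (P K k)

end KLR

/-!
The relations make the `e(i)` orthogonal idempotents summing to `1`. An idempotent `e` is
primitive as soon as every element of the corner `e R e` is a scalar multiple of `e` up to a
nilpotent. Since the entries of a sequence `i` are distinct, the braid relation holds without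
correction term, so by Matsumoto's theorem `ψ_w` is well defined for reduced words `w`, and the
quadratic relation straightens every word: `R` is spanned by the `ψ_w f(y) e(j)` with `w`
reduced. As `ψ_w e(j) = e(j ∘ w) ψ_w` and `i` is injective, `e(i) ψ_w f(y) e(j) e(i)` vanishes
unless `j = i` and `w = 1`, so the corner is `{f(y) e(i)}`. Finally the dots are nilpotent:
`y_1 = 0` by the cyclotomic relations, and `y_{k+1}^N ψ_k² e(i) = ψ_k y_k^N ψ_k e(i)` together
with the quadratic relation passes nilpotency from `y_k` to `y_{k+1}`.
-/

section Nilpotent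

variable {R : Type*} [Ring R]

lemma isNilpotent_of_pow_mul_sub_pow_eq_zero {a b : R} (hab : Commute a b) (ha : IsNilpotent a)
    {N m : ℕ} (h : b ^ N * (b - a) ^ m = 0) : IsNilpotent b := by
  have hbc : Commute b (b - a) := (Commute.refl b).sub_right hab.symm
  have hx : IsNilpotent (b * (b - a)) := by
    refine ⟨N + m, ?_⟩
    rw [hbc.mul_pow, pow_add, add_comm, pow_add, mul_assoc, ← mul_assoc (b ^ m),
      (hbc.pow_pow m m).eq, mul_assoc, ← mul_assoc, h, zero_mul]
  have hcomm : Commute (b * (b - a)) (b * a) :=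
    ((Commute.refl b).mul_right hab.symm).mul_left
      (hbc.symm.mul_right (hab.symm.sub_left (Commute.refl a)))
  have hsq : b ^ 2 = b * (b - a) + b * a := by rw [mul_sub, sub_add_cancel, sq]
  exact IsNilpotent.of_pow (hsq ▸ hcomm.isNilpotent_add hx (hab.symm.isNilpotent_mul_left ha))

end Nilpotent

lemma Algebra.exists_isNilpotent_sub_algebraMap_of_mem_adjoin {R A : Type*} [CommRing R]
    [Ring A] [Algebra R A] {s : Set A} (hcomm : ∀ a ∈ s, ∀ b ∈ s, Commute a b)
    (hnil : ∀ a ∈ s, IsNilpotent a) {x : A} (hx : x ∈ Algebra.adjoin R s) :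
    ∃ r : R, IsNilpotent (x - algebraMap R A r) := by
  have hS : ∀ u ∈ Algebra.adjoin R s, ∀ v ∈ Algebra.adjoin R s, Commute u v :=
    fun u hu v hv => Algebra.commute_of_mem_adjoin_of_forall_mem_commute hv fun b hb =>
      (Algebra.commute_of_mem_adjoin_of_forall_mem_commute hu fun a ha => hcomm b hb a ha).symm
  have hsub : ∀ {u} (r : R), u ∈ Algebra.adjoin R s → u - algebraMap R A r ∈ Algebra.adjoin R s :=
    fun r hu => sub_mem hu (Subalgebra.algebraMap_mem _ r)
  induction hx using Algebra.adjoin_induction with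
  | mem x hx => exact ⟨0, by simpa using hnil x hx⟩
  | algebraMap r => exact ⟨r, by simp⟩
  | add x y hx hy ihx ihy =>
    obtain ⟨r, hr⟩ := ihx
    obtain ⟨t, ht⟩ := ihy
    refine ⟨r + t, ?_⟩
    rw [map_add, add_sub_add_comm]
    exact (hS _ (hsub r hx) _ (hsub t hy)).isNilpotent_add hr ht
  | mul x y hx hy ihx ihy =>
    obtain ⟨r, hr⟩ := ihx
    obtain ⟨t, ht⟩ := ihy
    refine ⟨r * t, ?_⟩
    have hxy : x * y - algebraMap R A (r * t) = (x - algebraMap R A r) * (y - algebraMap R A t)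
        + r • (y - algebraMap R A t) + t • (x - algebraMap R A r) := by
      simp only [Algebra.smul_def, mul_sub, sub_mul, Algebra.commutes t x, ← map_mul,
        mul_comm t r]
      abel
    have hu := hsub r hx
    have hv := hsub t hy
    rw [hxy]
    have huv : IsNilpotent ((x - algebraMap R A r) * (y - algebraMap R A t)) :=
      (hS _ hu _ hv).isNilpotent_mul_left ht
    exact (hS _ (add_mem (mul_mem hu hv) (Subalgebra.smul_mem _ hv r)) _
      (Subalgebra.smul_mem _ hu t)).isNilpotent_add
      ((hS _ (mul_mem hu hv) _ (Subalgebra.smul_mem _ hv r)).isNilpotent_add huv (ht.smul r))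
      (hr.smul t)

section Idempotent

variable {K A : Type*} [Field K] [Ring A] [Algebra K A]

lemma IsIdempotentElem.eq_zero_of_isNilpotent_smul {g : A} (hg : IsIdempotentElem g) {c : K}
    (hc : c ≠ 0) (h : IsNilpotent (c • g)) : g = 0 :=
  hg.eq_zero_of_isNilpotent (by simpa [smul_smul, inv_mul_cancel₀ hc] using h.smul c⁻¹)

lemma IsIdempotentElem.eq_zero_or_eq_of_isNilpotent_sub_smul {e f : A}
    (he : IsIdempotentElem e) (hf : IsIdempotentElem f) (hef : e * f = f) (hfe : f * e = f)
    {c : K} (h : IsNilpotent (f - c • e)) : f = 0 ∨ f = e := by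
  have hcomm : Commute e f := hef.trans hfe.symm
  have h₁ : f * (f - c • e) = (1 - c) • f := by
    rw [mul_sub, hf.eq, mul_smul_comm, hfe, sub_smul, one_smul]
  have h₂ : (e - f) * (f - c • e) = (-c) • (e - f) := by
    simp only [sub_mul, mul_sub, mul_smul_comm, hef, hfe, he.eq, hf.eq, smul_sub, neg_smul]
    abel
  have hn₁ : IsNilpotent ((1 - c) • f) :=
    h₁ ▸ ((Commute.refl f).sub_right (hcomm.symm.smul_right c)).isNilpotent_mul_left h
  have hn₂ : IsNilpotent ((-c) • (e - f)) :=
    h₂ ▸ ((hcomm.sub_left (Commute.refl f)).sub_right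
      (((Commute.refl e).sub_left hcomm.symm).smul_right c)).isNilpotent_mul_left h
  by_contra! hne
  have hc₁ : 1 - c = 0 := by
    by_contra hc
    exact hne.1 (hf.eq_zero_of_isNilpotent_smul hc hn₁)
  have hc₂ : -c = 0 := by
    by_contra hc
    exact hne.2 (sub_eq_zero.1 ((hf.sub he hfe hef).eq_zero_of_isNilpotent_smul hc hn₂)).symm
  simp_all

theorem IsIdempotentElem.not_exists_orthogonal_sum {e : A} (he : IsIdempotentElem e)
    (hcorner : ∀ x : A, ∃ c : K, IsNilpotent (e * x * e - c • e)) :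
    ¬ ∃ f₁ f₂ : A, f₁ ≠ 0 ∧ f₂ ≠ 0 ∧ IsIdempotentElem f₁ ∧ IsIdempotentElem f₂ ∧
      f₁ * f₂ = 0 ∧ f₂ * f₁ = 0 ∧ e = f₁ + f₂ := by
  rintro ⟨f₁, f₂, hf₁, hf₂, hi₁, hi₂, h₁₂, h₂₁, rfl⟩
  have hl : (f₁ + f₂) * f₁ = f₁ := by rw [add_mul, hi₁.eq, h₂₁, add_zero]
  have hr : f₁ * (f₁ + f₂) = f₁ := by rw [mul_add, hi₁.eq, h₁₂, add_zero]
  obtain ⟨c, hc⟩ := hcorner f₁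
  rw [hl, hr] at hc
  rcases he.eq_zero_or_eq_of_isNilpotent_sub_smul hi₁ hl hr hc with h | h
  · exact hf₁ h
  · exact hf₂ (by simpa using h.symm)

end Idempotent

namespace KLR

variable {n : ℕ}

def sw (k : Fin (n - 1)) : Equiv.Perm (Fin n) := Equiv.swap (pos0 k) (pos1 k)

/-- The permutation of a word of crossings `[k₁, …, k_r]`, normalised so that
`ψ_{k₁} ⋯ ψ_{k_r} e(j) = e(j ∘ wordPerm [k₁, …, k_r]) ψ_{k₁} ⋯ ψ_{k_r}`. -/
def wordPerm : List (Fin (n - 1)) → Equiv.Perm (Fin n)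
  | [] => 1
  | k :: c => wordPerm c * sw k

@[simp] lemma wordPerm_nil : wordPerm ([] : List (Fin (n - 1))) = 1 := rfl

@[simp] lemma wordPerm_cons (k : Fin (n - 1)) (c : List (Fin (n - 1))) :
    wordPerm (k :: c) = wordPerm c * sw k := rfl

lemma pos0_lt_pos1 (k : Fin (n - 1)) : pos0 k < pos1 k := by
  simp [pos0, pos1, Fin.lt_def]

@[simp] lemma sw_mul_self (k : Fin (n - 1)) : sw k * sw k = 1 := Equiv.swap_mul_self _ _

@[simp] lemma sw_symm (k : Fin (n - 1)) : (sw k).symm = sw k := Equiv.symm_swap _ _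

@[simp] lemma sw_apply_sw (k : Fin (n - 1)) (x : Fin n) : sw k (sw k x) = x :=
  Equiv.swap_apply_self _ _ _

@[simp] lemma sw_apply_pos0 (k : Fin (n - 1)) : sw k (pos0 k) = pos1 k :=
  Equiv.swap_apply_left _ _

@[simp] lemma sw_apply_pos1 (k : Fin (n - 1)) : sw k (pos1 k) = pos0 k :=
  Equiv.swap_apply_right _ _

lemma sw_apply_of_val_ne {k : Fin (n - 1)} {x : Fin n} (h₀ : x.val ≠ k.val)
    (h₁ : x.val ≠ k.val + 1) : sw k x = x :=
  Equiv.swap_apply_of_ne_of_ne (fun h => h₀ (congrArg Fin.val h))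
    (fun h => h₁ (congrArg Fin.val h))

lemma wordPerm_cons_mul_sw (k : Fin (n - 1)) (c : List (Fin (n - 1))) :
    wordPerm (k :: c) * sw k = wordPerm c := by
  rw [wordPerm_cons, mul_assoc, sw_mul_self, mul_one]

lemma sw_lt_sw {k : Fin (n - 1)} {p q : Fin n} (hpq : p < q)
    (hne : (p, q) ≠ (pos0 k, pos1 k)) : sw k p < sw k q := by
  simp only [sw, Equiv.swap_apply_def]
  simp only [ne_eq, Prod.mk.injEq, Fin.ext_iff, Fin.lt_def, pos0, pos1] at hpq hne
  split_ifs <;> simp only [Fin.ext_iff, Fin.lt_def, pos0, pos1] at * <;> omega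

def inversions (σ : Equiv.Perm (Fin n)) : Finset (Fin n × Fin n) :=
  Finset.univ.filter fun x => x.1 < x.2 ∧ σ x.2 < σ x.1

def invCount (σ : Equiv.Perm (Fin n)) : ℕ := (inversions σ).card

lemma mem_inversions {σ : Equiv.Perm (Fin n)} {x : Fin n × Fin n} :
    x ∈ inversions σ ↔ x.1 < x.2 ∧ σ x.2 < σ x.1 := by
  simp [inversions]

@[simp] lemma invCount_one : invCount (1 : Equiv.Perm (Fin n)) = 0 := by
  simp only [invCount, Finset.card_eq_zero, Finset.eq_empty_iff_forall_notMem, mem_inversions,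
    Equiv.Perm.coe_one, id_eq]
  exact fun x h => lt_asymm h.1 h.2

lemma inversions_mul_sw {σ : Equiv.Perm (Fin n)} {k : Fin (n - 1)}
    (h : σ (pos0 k) < σ (pos1 k)) :
    inversions (σ * sw k) = insert (pos0 k, pos1 k)
      ((inversions σ).map ((sw k).prodCongr (sw k)).toEmbedding) := by
  ext ⟨p, q⟩
  simp only [Finset.mem_insert, Finset.mem_map_equiv, mem_inversions, Equiv.Perm.mul_apply,
    Equiv.prodCongr_symm, Equiv.prodCongr_apply, Prod.map, Prod.mk.injEq, sw_symm]
  by_cases hk : (p, q) = (pos0 k, pos1 k)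
  · simp only [Prod.mk.injEq] at hk
    obtain ⟨rfl, rfl⟩ := hk
    simpa [pos0_lt_pos1] using h
  · have hk' : ¬(p = pos0 k ∧ q = pos1 k) := fun h' => hk (by rw [h'.1, h'.2])
    simp only [hk', false_or]
    refine and_congr_left fun hσ => ⟨fun hpq => sw_lt_sw hpq hk, fun hpq => ?_⟩
    have hsw : (sw k p, sw k q) ≠ (pos0 k, pos1 k) := by
      intro heq
      simp only [Prod.mk.injEq] at heq
      have hp : p = pos1 k := by simpa using congrArg (sw k) heq.1
      have hq : q = pos0 k := by simpa using congrArg (sw k) heq.2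
      subst hp hq
      simp only [sw_apply_pos0, sw_apply_pos1] at hσ
      exact lt_asymm h hσ
    simpa using sw_lt_sw hpq hsw

lemma invCount_mul_sw_of_lt {σ : Equiv.Perm (Fin n)} {k : Fin (n - 1)}
    (h : σ (pos0 k) < σ (pos1 k)) : invCount (σ * sw k) = invCount σ + 1 := by
  rw [invCount, inversions_mul_sw h, Finset.card_insert_of_notMem, Finset.card_map, invCount]
  simp [mem_inversions, (pos0_lt_pos1 k).not_gt]

lemma apply_pos0_lt_or_apply_pos1_lt (σ : Equiv.Perm (Fin n)) (k : Fin (n - 1)) :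
    σ (pos0 k) < σ (pos1 k) ∨ σ (pos1 k) < σ (pos0 k) :=
  lt_or_gt_of_ne (σ.injective.ne (pos0_lt_pos1 k).ne)

lemma invCount_mul_sw_of_gt {σ : Equiv.Perm (Fin n)} {k : Fin (n - 1)}
    (h : σ (pos1 k) < σ (pos0 k)) : invCount (σ * sw k) + 1 = invCount σ := by
  have h' : (σ * sw k) (pos0 k) < (σ * sw k) (pos1 k) := by simpa using h
  simpa [mul_assoc] using (invCount_mul_sw_of_lt h').symm

lemma eq_one_of_forall_apply_pos0_lt {σ : Equiv.Perm (Fin n)}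
    (h : ∀ k : Fin (n - 1), σ (pos0 k) < σ (pos1 k)) : σ = 1 := by
  cases n with
  | zero => exact Subsingleton.elim _ _
  | succ m =>
    have hσ : StrictMono σ := Fin.strictMono_iff_lt_succ.2 fun k => h k
    exact Equiv.ext fun x => hσ.apply_eq

lemma exists_descent {σ : Equiv.Perm (Fin n)} (h : σ ≠ 1) :
    ∃ k : Fin (n - 1), σ (pos1 k) < σ (pos0 k) := by
  by_contra! hσ
  exact h (eq_one_of_forall_apply_pos0_lt fun k =>
    (apply_pos0_lt_or_apply_pos1_lt σ k).resolve_right (hσ k).not_gt)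

lemma eq_one_of_invCount_eq_zero {σ : Equiv.Perm (Fin n)} (h : invCount σ = 0) : σ = 1 := by
  by_contra hσ
  obtain ⟨k, hk⟩ := exists_descent hσ
  have := invCount_mul_sw_of_gt hk
  omega

lemma invCount_wordPerm_le (c : List (Fin (n - 1))) : invCount (wordPerm c) ≤ c.length := by
  induction c with
  | nil => simp
  | cons k c ih =>
    rcases apply_pos0_lt_or_apply_pos1_lt (wordPerm c) k with h | h
    · simpa [invCount_mul_sw_of_lt h] using ih
    · have := invCount_mul_sw_of_gt h
      simp only [wordPerm_cons, List.length_cons]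
      omega

def IsReducedWord (c : List (Fin (n - 1))) : Prop := c.length = invCount (wordPerm c)

lemma exists_isReducedWord (σ : Equiv.Perm (Fin n)) :
    ∃ c : List (Fin (n - 1)), IsReducedWord c ∧ wordPerm c = σ := by
  induction hℓ : invCount σ generalizing σ with
  | zero => exact ⟨[], by simp [IsReducedWord], (eq_one_of_invCount_eq_zero hℓ).symm⟩
  | succ ℓ ih =>
    obtain ⟨k, hk⟩ := exists_descent fun h : σ = 1 => by simp [h] at hℓ
    have hk' := invCount_mul_sw_of_gt hk
    obtain ⟨c, hc, hcσ⟩ := ih (σ * sw k) (by omega)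
    refine ⟨k :: c, ?_, by simp [hcσ, mul_assoc]⟩
    simp only [IsReducedWord, List.length_cons, wordPerm_cons, hcσ, mul_assoc, sw_mul_self,
      mul_one] at hc ⊢
    omega

lemma isReducedWord_cons_iff {k : Fin (n - 1)} {c : List (Fin (n - 1))} :
    IsReducedWord (k :: c) ↔ IsReducedWord c ∧ wordPerm c (pos0 k) < wordPerm c (pos1 k) := by
  have hc := invCount_wordPerm_le c
  simp only [IsReducedWord, List.length_cons, wordPerm_cons]
  rcases apply_pos0_lt_or_apply_pos1_lt (wordPerm c) k with h | h
  · rw [invCount_mul_sw_of_lt h]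
    simp [h]
  · have := invCount_mul_sw_of_gt h
    simp only [h.not_gt, and_false, iff_false]
    omega

lemma IsReducedWord.tail {k : Fin (n - 1)} {c : List (Fin (n - 1))}
    (h : IsReducedWord (k :: c)) : IsReducedWord c :=
  (isReducedWord_cons_iff.1 h).1

lemma IsReducedWord.descent {k : Fin (n - 1)} {c : List (Fin (n - 1))}
    (h : IsReducedWord (k :: c)) : wordPerm (k :: c) (pos1 k) < wordPerm (k :: c) (pos0 k) := by
  simpa using (isReducedWord_cons_iff.1 h).2

lemma IsReducedWord.eq_nil {c : List (Fin (n - 1))} (h : IsReducedWord c)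
    (hc : wordPerm c = 1) : c = [] := by
  rw [IsReducedWord, hc, invCount_one] at h
  exact List.length_eq_zero_iff.1 h

lemma sw_mul_comm {a b : Fin (n - 1)} (h : a.val + 1 < b.val ∨ b.val + 1 < a.val) :
    sw a * sw b = sw b * sw a := by
  ext x
  simp only [Equiv.Perm.mul_apply, sw, Equiv.swap_apply_def]
  split_ifs <;> simp only [Fin.ext_iff, pos0, pos1] at * <;> omega

lemma sw_braid {a b : Fin (n - 1)} (h : b.val = a.val + 1) :
    sw a * sw b * sw a = sw b * sw a * sw b := by
  have hb : pos0 b = pos1 a := Fin.ext h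
  have hxy : pos0 a ≠ pos1 a := (pos0_lt_pos1 a).ne
  have hxz : pos0 a ≠ pos1 b := fun h' => by simp [Fin.ext_iff, pos0, pos1] at h'; omega
  have hyz : pos1 a ≠ pos1 b := fun h' => by simp [Fin.ext_iff, pos1] at h'; omega
  simp only [sw, hb]
  rw [Equiv.swap_mul_swap_mul_swap hxy hxz, Equiv.swap_comm (pos0 a) (pos1 a),
    Equiv.swap_comm (pos1 a) (pos1 b),
    Equiv.swap_mul_swap_mul_swap (Ne.symm hyz) (Ne.symm hxz), Equiv.swap_comm]

inductive BraidEquiv : List (Fin (n - 1)) → List (Fin (n - 1)) → Prop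
  | refl (c) : BraidEquiv c c
  | symm {c d} : BraidEquiv c d → BraidEquiv d c
  | trans {c d e} : BraidEquiv c d → BraidEquiv d e → BraidEquiv c e
  | cons (a) {c d} : BraidEquiv c d → BraidEquiv (a :: c) (a :: d)
  | swap (a b c) (h : a.val + 1 < b.val ∨ b.val + 1 < a.val) :
      BraidEquiv (a :: b :: c) (b :: a :: c)
  | braid (a b c) (h : b.val = a.val + 1) : BraidEquiv (a :: b :: a :: c) (b :: a :: b :: c)

lemma BraidEquiv.length_eq {c d : List (Fin (n - 1))} (h : BraidEquiv c d) :
    c.length = d.length := by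
  induction h <;> simp_all

lemma invCount_mul_sw_mul_sw {σ : Equiv.Perm (Fin n)} {a b : Fin (n - 1)}
    (h : a.val + 1 < b.val ∨ b.val + 1 < a.val) (ha : σ (pos1 a) < σ (pos0 a))
    (hb : σ (pos1 b) < σ (pos0 b)) : invCount (σ * sw a * sw b) + 2 = invCount σ := by
  have hb' : (σ * sw a) (pos1 b) < (σ * sw a) (pos0 b) := by
    rwa [Equiv.Perm.mul_apply, Equiv.Perm.mul_apply, sw_apply_of_val_ne, sw_apply_of_val_ne] <;>
      simp [pos0, pos1] <;> omega
  have := invCount_mul_sw_of_gt ha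
  have := invCount_mul_sw_of_gt hb'
  omega

lemma invCount_mul_sw_mul_sw_mul_sw {σ : Equiv.Perm (Fin n)} {a b : Fin (n - 1)}
    (h : b.val = a.val + 1) (ha : σ (pos1 a) < σ (pos0 a)) (hb : σ (pos1 b) < σ (pos0 b)) :
    invCount (σ * sw a * sw b * sw a) + 3 = invCount σ := by
  have hb0 : pos0 b = pos1 a := Fin.ext h
  have hb1 : sw a (pos1 b) = pos1 b :=
    sw_apply_of_val_ne (by simp [pos1]; omega) (by simp [pos1]; omega)
  have ha0 : sw b (pos0 a) = pos0 a :=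
    sw_apply_of_val_ne (by simp [pos0]; omega) (by simp [pos0]; omega)
  rw [hb0] at hb
  have h₁ : (σ * sw a) (pos1 b) < (σ * sw a) (pos0 b) := by
    simpa [hb0, hb1] using hb.trans ha
  have h₂ : (σ * sw a * sw b) (pos1 a) < (σ * sw a * sw b) (pos0 a) := by
    simpa [← hb0, ha0, hb1] using hb
  have := invCount_mul_sw_of_gt ha
  have := invCount_mul_sw_of_gt h₁
  have := invCount_mul_sw_of_gt h₂
  omega

/-- The common final step of the cases of Matsumoto's theorem below. -/
lemma braidEquiv_cons_cons {a b : Fin (n - 1)} {t₁ t₂ u₁ u₂ : List (Fin (n - 1))}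
    (ih : ∀ c c' : List (Fin (n - 1)), c.length = t₁.length → IsReducedWord c →
      IsReducedWord c' → wordPerm c = wordPerm c' → BraidEquiv c c')
    (h₁ : IsReducedWord (a :: t₁)) (h₂ : IsReducedWord (b :: t₂))
    (hw : wordPerm (a :: t₁) = wordPerm (b :: t₂)) (hu : BraidEquiv (a :: u₁) (b :: u₂))
    (hu₁ : wordPerm u₁ = wordPerm t₁) (hu₂ : wordPerm u₂ = wordPerm t₂)
    (hl : u₁.length = t₁.length) : BraidEquiv (a :: t₁) (b :: t₂) := by
  have ht : t₁.length = t₂.length := by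
    rw [IsReducedWord, hw] at h₁
    simpa using h₁.trans h₂.symm
  have hl₂ : u₂.length = t₂.length := by simpa [hl, ht] using hu.length_eq.symm
  have hr₁ : IsReducedWord u₁ := by rw [IsReducedWord, hu₁, hl]; exact h₁.tail
  have hr₂ : IsReducedWord u₂ := by rw [IsReducedWord, hu₂, hl₂]; exact h₂.tail
  exact ((BraidEquiv.cons a (ih t₁ u₁ rfl h₁.tail hr₁ hu₁.symm)).trans hu).trans
    (BraidEquiv.cons b (ih t₂ u₂ ht.symm h₂.tail hr₂ hu₂.symm)).symm

lemma braidEquiv_cons_cons_of_succ {a b : Fin (n - 1)} {t₁ t₂ : List (Fin (n - 1))}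
    (ih : ∀ c c' : List (Fin (n - 1)), c.length = t₁.length → IsReducedWord c →
      IsReducedWord c' → wordPerm c = wordPerm c' → BraidEquiv c c')
    (h₁ : IsReducedWord (a :: t₁)) (h₂ : IsReducedWord (b :: t₂))
    (hw : wordPerm (a :: t₁) = wordPerm (b :: t₂)) (hab : b.val = a.val + 1) :
    BraidEquiv (a :: t₁) (b :: t₂) := by
  have ha := h₁.descent
  have hb := hw ▸ h₂.descent
  have hl := h₁
  rw [IsReducedWord, List.length_cons] at hl
  obtain ⟨w, hwr, hwσ⟩ := exists_isReducedWord (wordPerm (a :: t₁) * sw a * sw b * sw a)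
  rw [IsReducedWord, hwσ] at hwr
  have := invCount_mul_sw_mul_sw_mul_sw hab ha hb
  refine braidEquiv_cons_cons (u₁ := b :: a :: w) (u₂ := a :: b :: w) ih h₁ h₂ hw
    (.braid a b w hab) ?_ ?_ (by simp only [List.length_cons]; omega)
  · simp [hwσ, mul_assoc]
  · simp only [wordPerm_cons, hwσ, hw, sw_braid hab, mul_assoc, sw_mul_self, mul_one]

lemma braidEquiv_cons_cons_of_far {a b : Fin (n - 1)} {t₁ t₂ : List (Fin (n - 1))}
    (ih : ∀ c c' : List (Fin (n - 1)), c.length = t₁.length → IsReducedWord c →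
      IsReducedWord c' → wordPerm c = wordPerm c' → BraidEquiv c c')
    (h₁ : IsReducedWord (a :: t₁)) (h₂ : IsReducedWord (b :: t₂))
    (hw : wordPerm (a :: t₁) = wordPerm (b :: t₂)) (hab : a.val + 1 < b.val ∨ b.val + 1 < a.val) :
    BraidEquiv (a :: t₁) (b :: t₂) := by
  have ha := h₁.descent
  have hb := hw ▸ h₂.descent
  have hl := h₁
  rw [IsReducedWord, List.length_cons] at hl
  obtain ⟨w, hwr, hwσ⟩ := exists_isReducedWord (wordPerm (a :: t₁) * sw a * sw b)
  rw [IsReducedWord, hwσ] at hwr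
  have := invCount_mul_sw_mul_sw hab ha hb
  refine braidEquiv_cons_cons (u₁ := b :: w) (u₂ := a :: w) ih h₁ h₂ hw
    (.swap a b w hab) ?_ ?_ (by simp only [List.length_cons]; omega)
  · simp [hwσ, mul_assoc]
  · simp only [wordPerm_cons, hwσ, hw, mul_assoc, sw_mul_comm hab, sw_mul_self, mul_one]

/-- Matsumoto's theorem for the symmetric group. -/
theorem braidEquiv_of_wordPerm_eq {c₁ c₂ : List (Fin (n - 1))} (h₁ : IsReducedWord c₁)
    (h₂ : IsReducedWord c₂) (hw : wordPerm c₁ = wordPerm c₂) : BraidEquiv c₁ c₂ := by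
  induction hm : c₁.length using Nat.strong_induction_on generalizing c₁ c₂ with
  | _ m ih =>
  match c₁, c₂ with
  | [], c₂ => rw [h₂.eq_nil hw.symm]; exact .refl _
  | c₁, [] => rw [h₁.eq_nil hw]; exact .refl _
  | a :: t₁, b :: t₂ =>
    have ih₁ : ∀ c c' : List (Fin (n - 1)), c.length = t₁.length → IsReducedWord c →
        IsReducedWord c' → wordPerm c = wordPerm c' → BraidEquiv c c' :=
      fun c c' hc hr hr' hcc' => ih _ (by simp [← hm, hc]) hr hr' hcc' rfl
    have ht : t₂.length = t₁.length := by
      rw [IsReducedWord, hw] at h₁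
      simpa using h₂.trans h₁.symm
    rcases (by omega : a.val = b.val ∨ b.val = a.val + 1 ∨ a.val = b.val + 1 ∨
      (a.val + 1 < b.val ∨ b.val + 1 < a.val)) with hab | hab | hab | hab
    · obtain rfl : a = b := Fin.ext hab
      refine .cons a (ih₁ t₁ t₂ rfl h₁.tail h₂.tail ?_)
      rw [← wordPerm_cons_mul_sw a t₁, hw, wordPerm_cons_mul_sw]
    · exact braidEquiv_cons_cons_of_succ ih₁ h₁ h₂ hw hab
    · exact (braidEquiv_cons_cons_of_succ (fun c c' hc => ih₁ c c' (hc.trans ht)) h₂ h₁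
        hw.symm hab).symm
    · exact braidEquiv_cons_cons_of_far ih₁ h₁ h₂ hw hab

section Algebra

variable {K : Type} [Field K]

lemma mk_eq_mk_of_rel {a b : KLRFree K n} (h : Rel K n a b) : mk K n a = mk K n b :=
  RingQuot.mkAlgHom_rel K h

lemma e_mul_e (i j : KLRSeq n) : e K i * e K j = if i = j then e K i else 0 := by
  simpa [e, apply_ite (mk K n)] using mk_eq_mk_of_rel (Rel.idem (K := K) i j)

lemma sum_e : ∑ i : KLRSeq n, e K i = 1 := by
  simpa [e, mk] using mk_eq_mk_of_rel (Rel.sum_eq_one (K := K) (n := n))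

lemma commute_y_e (k : Fin n) (i : KLRSeq n) : Commute (y K k) (e K i) := by
  simpa [Commute, SemiconjBy, e, y, mk] using mk_eq_mk_of_rel (Rel.ye (K := K) k i)

lemma p_mul_e (k : Fin (n - 1)) (i : KLRSeq n) : p K k * e K i = e K (swapSeq k i) * p K k := by
  simpa [e, p, mk] using mk_eq_mk_of_rel (Rel.psie (K := K) k i)

lemma commute_y_y (k l : Fin n) : Commute (y K k) (y K l) := by
  simpa [Commute, SemiconjBy, y, mk] using mk_eq_mk_of_rel (Rel.yy (K := K) k l)

lemma p_mul_y_of_ne (k : Fin (n - 1)) (l : Fin n) (h : l.val ≠ k.val ∧ l.val ≠ k.val + 1) :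
    p K k * y K l = y K l * p K k := by
  simpa [y, p, mk] using mk_eq_mk_of_rel (Rel.psiy (K := K) k l h)

lemma commute_p_p (k l : Fin (n - 1)) (h : k.val + 1 < l.val ∨ l.val + 1 < k.val) :
    Commute (p K k) (p K l) := by
  simpa [Commute, SemiconjBy, p, mk] using mk_eq_mk_of_rel (Rel.psipsi (K := K) k l h)

lemma p_mul_y_pos1_mul_e (k : Fin (n - 1)) (i : KLRSeq n) :
    p K k * (y K (pos1 k) * e K i) = y K (pos0 k) * (p K k * e K i) := by
  simpa [e, y, p, mk] using mk_eq_mk_of_rel (Rel.psiy1 (K := K) k i)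

lemma y_pos1_mul_p_mul_e (k : Fin (n - 1)) (i : KLRSeq n) :
    y K (pos1 k) * (p K k * e K i) = p K k * (y K (pos0 k) * e K i) := by
  simpa [e, y, p, mk] using mk_eq_mk_of_rel (Rel.ypsi (K := K) k i)

lemma p_mul_p_mul_e (k : Fin (n - 1)) (i : KLRSeq n) :
    p K k * (p K k * e K i) = mk K n (quadTerm K k i) := by
  simpa [e, p, mk] using mk_eq_mk_of_rel (Rel.sq (K := K) k i)

lemma braid_mul_e (k : Fin (n - 1)) (h : k.val + 1 < n - 1) (i : KLRSeq n) :
    p K k * (p K ⟨k.val + 1, h⟩ * (p K k * e K i)) =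
      p K ⟨k.val + 1, h⟩ * (p K k * (p K ⟨k.val + 1, h⟩ * e K i)) := by
  simpa [e, p, mk] using mk_eq_mk_of_rel (Rel.braid (K := K) k h i)

lemma y_mul_e_of_eq_zero (hn : 0 < n) (i : KLRSeq n) (h : i.1 ⟨0, hn⟩ = 0) :
    y K ⟨0, hn⟩ * e K i = 0 := by
  simpa [e, y, mk] using mk_eq_mk_of_rel (Rel.cyc0 (K := K) hn i h)

lemma e_eq_zero (hn : 0 < n) (i : KLRSeq n) (h : i.1 ⟨0, hn⟩ ≠ 0) : e K i = 0 := by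
  simpa [e, mk] using mk_eq_mk_of_rel (Rel.cyc1 (K := K) hn i h)

lemma isIdempotentElem_e (i : KLRSeq n) : IsIdempotentElem (e K i) := by
  simp [IsIdempotentElem, e_mul_e]

lemma e_mul_e_of_ne {i j : KLRSeq n} (h : i ≠ j) : e K i * e K j = 0 := by
  simp [e_mul_e, h]

lemma eq_of_forall_mul_e {x z : CKLR K n} (h : ∀ i, x * e K i = z * e K i) : x = z := by
  rw [← mul_one x, ← mul_one z, ← sum_e, Finset.mul_sum, Finset.mul_sum]
  exact Finset.sum_congr rfl fun i _ => h i

lemma y_mul_p (k : Fin (n - 1)) (l : Fin n) : y K l * p K k = p K k * y K (sw k l) := by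
  by_cases h₀ : l = pos0 k
  · subst h₀
    refine eq_of_forall_mul_e fun i => ?_
    simpa [mul_assoc] using (p_mul_y_pos1_mul_e k i).symm
  by_cases h₁ : l = pos1 k
  · subst h₁
    refine eq_of_forall_mul_e fun i => ?_
    simpa [mul_assoc] using y_pos1_mul_p_mul_e k i
  rw [sw, Equiv.swap_apply_of_ne_of_ne h₀ h₁, p_mul_y_of_ne]
  exact ⟨fun h => h₀ (Fin.ext h), fun h => h₁ (Fin.ext h)⟩

lemma y_pow_mul_p (k : Fin (n - 1)) (l : Fin n) (m : ℕ) :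
    y K l ^ m * p K k = p K k * y K (sw k l) ^ m :=
  (SemiconjBy.pow_right (y_mul_p k l).symm m).symm

lemma p_braid (k : Fin (n - 1)) (h : k.val + 1 < n - 1) :
    p K k * p K ⟨k.val + 1, h⟩ * p K k = p K ⟨k.val + 1, h⟩ * p K k * p K ⟨k.val + 1, h⟩ :=
  eq_of_forall_mul_e fun i => by simpa [mul_assoc] using braid_mul_e k h i

noncomputable def psiWord (K : Type) [Field K] (c : List (Fin (n - 1))) : CKLR K n :=
  (c.map (p K)).prod

@[simp] lemma psiWord_nil : psiWord K ([] : List (Fin (n - 1))) = 1 := rfl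

@[simp] lemma psiWord_cons (k : Fin (n - 1)) (c : List (Fin (n - 1))) :
    psiWord K (k :: c) = p K k * psiWord K c := rfl

def permSeq (σ : Equiv.Perm (Fin n)) (j : KLRSeq n) : KLRSeq n :=
  ⟨j.1 ∘ σ, j.2.comp σ.bijective⟩

lemma psiWord_mul_e (c : List (Fin (n - 1))) (j : KLRSeq n) :
    psiWord K c * e K j = e K (permSeq (wordPerm c) j) * psiWord K c := by
  induction c with
  | nil => rw [psiWord_nil, one_mul, mul_one]; rfl
  | cons k c ih =>
    rw [psiWord_cons, mul_assoc, ih, ← mul_assoc, p_mul_e, mul_assoc]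
    rfl

lemma y_mul_psiWord (l : Fin n) (c : List (Fin (n - 1))) :
    y K l * psiWord K c = psiWord K c * y K (wordPerm c l) := by
  induction c generalizing l with
  | nil => simp
  | cons k c ih => rw [psiWord_cons, ← mul_assoc, y_mul_p, mul_assoc, ih, ← mul_assoc]; rfl

lemma psiWord_eq_of_braidEquiv {c d : List (Fin (n - 1))} (h : BraidEquiv c d) :
    psiWord K c = psiWord K d := by
  induction h with
  | refl => rfl
  | symm _ ih => exact ih.symm
  | trans _ _ ih₁ ih₂ => exact ih₁.trans ih₂
  | cons a _ ih => simp [ih]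
  | swap a b c h => simp only [psiWord_cons, ← mul_assoc, (commute_p_p a b h).eq]
  | braid a b c h =>
    have ha : a.val + 1 < n - 1 := h ▸ b.isLt
    obtain rfl : b = ⟨a.val + 1, ha⟩ := Fin.ext h
    simp only [psiWord_cons, ← mul_assoc, p_braid]

noncomputable def dotAlgebra (K : Type) [Field K] (n : ℕ) : Subalgebra K (CKLR K n) :=
  Algebra.adjoin K (Set.range (y K))

lemma y_mem_dotAlgebra (k : Fin n) : y K k ∈ dotAlgebra K n :=
  Algebra.subset_adjoin ⟨k, rfl⟩

lemma commute_e_of_mem_dotAlgebra (i : KLRSeq n) {a : CKLR K n} (ha : a ∈ dotAlgebra K n) :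
    Commute (e K i) a :=
  Algebra.commute_of_mem_adjoin_of_forall_mem_commute ha <| by
    rintro _ ⟨k, rfl⟩
    exact (commute_y_e k i).symm

lemma exists_mul_psiWord_eq {a : CKLR K n} (ha : a ∈ dotAlgebra K n) (c : List (Fin (n - 1))) :
    ∃ a' ∈ dotAlgebra K n, a * psiWord K c = psiWord K c * a' := by
  induction ha using Algebra.adjoin_induction with
  | mem x hx =>
    obtain ⟨l, rfl⟩ := hx
    exact ⟨_, y_mem_dotAlgebra _, y_mul_psiWord l c⟩
  | algebraMap r => exact ⟨_, Subalgebra.algebraMap_mem _ r, Algebra.commutes r _⟩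
  | add x z _ _ ihx ihz =>
    obtain ⟨x', hx', hx⟩ := ihx
    obtain ⟨z', hz', hz⟩ := ihz
    exact ⟨x' + z', add_mem hx' hz', by rw [add_mul, mul_add, hx, hz]⟩
  | mul x z _ _ ihx ihz =>
    obtain ⟨x', hx', hx⟩ := ihx
    obtain ⟨z', hz', hz⟩ := ihz
    exact ⟨x' * z', mul_mem hx' hz', by rw [mul_assoc, hz, ← mul_assoc, hx, mul_assoc]⟩

-- In `CKLR K n` the instance paths to `Neg` and to `Mul` differ, so `rw`/`simp` with lemmas
-- such as `neg_mul` fail; signs are therefore carried as scalars `(-1 : K) •`.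
lemma exists_p_mul_p_mul_e (k : Fin (n - 1)) (i : KLRSeq n) :
    ∃ d ≤ 2, ∃ s : K, s ≠ 0 ∧
      p K k * (p K k * e K i) = s • ((y K (pos1 k) - y K (pos0 k)) ^ d * e K i) := by
  rw [p_mul_p_mul_e, quadTerm]
  split_ifs
  · refine ⟨2, le_rfl, -1, by simp, ?_⟩
    simp only [map_mul, map_sub]
    change (y K _ - y K _) * ((y K _ - y K _) * e K i) = _
    rw [show y K (pos0 k) - y K (pos1 k) = (-1 : K) • (y K (pos1 k) - y K (pos0 k)) by module,
      smul_mul_assoc, mul_smul_comm, sq, mul_assoc]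
  · exact ⟨1, by norm_num, 1, one_ne_zero, by simp [map_mul, map_sub, e, y]⟩
  · refine ⟨1, by norm_num, -1, by simp, ?_⟩
    simp only [map_mul, map_sub]
    change (y K _ - y K _) * e K i = _
    rw [show y K (pos0 k) - y K (pos1 k) = (-1 : K) • (y K (pos1 k) - y K (pos0 k)) by module,
      smul_mul_assoc, pow_one]
  · exact ⟨0, by norm_num, 1, one_ne_zero, by simp [e]⟩

lemma y_eq_zero (hn : 0 < n) : y K ⟨0, hn⟩ = 0 :=
  eq_of_forall_mul_e fun i => by
    rw [zero_mul]
    by_cases h : i.1 ⟨0, hn⟩ = 0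
    · exact y_mul_e_of_eq_zero hn i h
    · rw [e_eq_zero hn i h, mul_zero]

/-- If `y_k^N = 0` then `y_{k+1}^N ψ_k² e(i) = ψ_k y_k^N ψ_k e(i) = 0`, and by the quadratic
relation this says `y_{k+1}^N (y_{k+1} - y_k)^d e(i) = 0` for some `d ≤ 2`. -/
lemma isNilpotent_y_pos1 (k : Fin (n - 1)) (h : IsNilpotent (y K (pos0 k))) :
    IsNilpotent (y K (pos1 k)) := by
  obtain ⟨N, hN⟩ := h
  refine isNilpotent_of_pow_mul_sub_pow_eq_zero (N := N) (m := 2) (commute_y_y _ _) ⟨N, hN⟩ ?_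
  refine eq_of_forall_mul_e fun i => ?_
  obtain ⟨d, hd, s, hs, hq⟩ := exists_p_mul_p_mul_e (K := K) k i
  have h0 : y K (pos1 k) ^ N * (p K k * (p K k * e K i)) = 0 := by
    rw [← mul_assoc, y_pow_mul_p, sw_apply_pos1, mul_assoc, ← mul_assoc (y K (pos0 k) ^ N), hN,
      zero_mul, zero_mul, mul_zero]
  rw [hq, mul_smul_comm, smul_eq_zero_iff_right hs] at h0
  have hc : Commute (y K (pos1 k)) (y K (pos1 k) - y K (pos0 k)) :=
    (Commute.refl _).sub_right (commute_y_y _ _)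
  calc y K (pos1 k) ^ N * (y K (pos1 k) - y K (pos0 k)) ^ 2 * e K i
      = (y K (pos1 k) - y K (pos0 k)) ^ (2 - d) *
          (y K (pos1 k) ^ N * ((y K (pos1 k) - y K (pos0 k)) ^ d * e K i)) := by
        rw [← mul_assoc, ← mul_assoc, ← (hc.pow_pow N (2 - d)).eq, mul_assoc _ _ (_ ^ d),
          ← pow_add, Nat.sub_add_cancel hd, mul_assoc]
    _ = 0 * e K i := by rw [h0, mul_zero, zero_mul]

lemma isNilpotent_y (l : Fin n) : IsNilpotent (y K l) := by
  obtain ⟨m, hm⟩ := l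
  induction m with
  | zero => exact ⟨1, by rw [pow_one, y_eq_zero]⟩
  | succ m ih => exact isNilpotent_y_pos1 (K := K) ⟨m, by omega⟩ (ih (by omega))

lemma exists_isNilpotent_sub_algebraMap {a : CKLR K n} (ha : a ∈ dotAlgebra K n) :
    ∃ c : K, IsNilpotent (a - algebraMap K (CKLR K n) c) := by
  refine Algebra.exists_isNilpotent_sub_algebraMap_of_mem_adjoin ?_ ?_ ha
  · rintro _ ⟨k, rfl⟩ _ ⟨l, rfl⟩
    exact commute_y_y k l
  · rintro _ ⟨k, rfl⟩
    exact isNilpotent_y k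

lemma psiWord_mul_mul_e_eq_e_mul {a : CKLR K n} (ha : a ∈ dotAlgebra K n) (c : List (Fin (n - 1)))
    (j : KLRSeq n) :
    psiWord K c * a * e K j = e K (permSeq (wordPerm c) j) * (psiWord K c * a * e K j) := by
  calc psiWord K c * a * e K j = psiWord K c * (a * e K j * e K j) := by
        rw [mul_assoc a, (isIdempotentElem_e j).eq, mul_assoc]
    _ = psiWord K c * (e K j * a * e K j) := by rw [(commute_e_of_mem_dotAlgebra j ha).eq]
    _ = psiWord K c * e K j * (a * e K j) := by simp only [mul_assoc]
    _ = e K (permSeq (wordPerm c) j) * (psiWord K c * a * e K j) := by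
        rw [psiWord_mul_e]
        simp only [mul_assoc]

noncomputable def reducedSpan (K : Type) [Field K] (n : ℕ) : Submodule K (CKLR K n) :=
  Submodule.span K {x | ∃ (c : List (Fin (n - 1))) (a : CKLR K n) (j : KLRSeq n),
    IsReducedWord c ∧ a ∈ dotAlgebra K n ∧ x = psiWord K c * a * e K j}

lemma monomial_mem_reducedSpan {c : List (Fin (n - 1))} {a : CKLR K n} (j : KLRSeq n)
    (hc : IsReducedWord c) (ha : a ∈ dotAlgebra K n) :
    psiWord K c * a * e K j ∈ reducedSpan K n :=
  Submodule.subset_span ⟨c, a, j, hc, ha, rfl⟩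

lemma mul_mem_reducedSpan {x : CKLR K n}
    (hx : ∀ (c : List (Fin (n - 1))) (a : CKLR K n) (j : KLRSeq n), IsReducedWord c →
      a ∈ dotAlgebra K n → x * (psiWord K c * a * e K j) ∈ reducedSpan K n)
    {v : CKLR K n} (hv : v ∈ reducedSpan K n) : x * v ∈ reducedSpan K n := by
  refine (Submodule.span_le (p := (reducedSpan K n).comap (LinearMap.mulLeft K x))).2 ?_ hv
  rintro _ ⟨c, a, j, hc, ha, rfl⟩
  exact hx c a j hc ha

lemma e_mul_mem_reducedSpan (i : KLRSeq n) {v : CKLR K n} (hv : v ∈ reducedSpan K n) :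
    e K i * v ∈ reducedSpan K n := by
  refine mul_mem_reducedSpan (fun c a j hc ha => ?_) hv
  rw [psiWord_mul_mul_e_eq_e_mul ha, ← mul_assoc, e_mul_e]
  split_ifs with h
  · rw [h, ← psiWord_mul_mul_e_eq_e_mul ha]
    exact monomial_mem_reducedSpan j hc ha
  · rw [zero_mul]
    exact zero_mem _

lemma y_mul_mem_reducedSpan (l : Fin n) {v : CKLR K n} (hv : v ∈ reducedSpan K n) :
    y K l * v ∈ reducedSpan K n := by
  refine mul_mem_reducedSpan (fun c a j hc ha => ?_) hv
  rw [← mul_assoc, ← mul_assoc, y_mul_psiWord, mul_assoc (psiWord K c)]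
  exact monomial_mem_reducedSpan j hc (mul_mem (y_mem_dotAlgebra _) ha)

/-- If `k :: c` is not reduced, then `c` is braid equivalent to a reduced word `k :: w`
(Matsumoto), and `ψ_k ψ_c = ψ_k² ψ_w` is straightened by the quadratic relation. -/
lemma p_mul_mem_reducedSpan (k : Fin (n - 1)) {v : CKLR K n} (hv : v ∈ reducedSpan K n) :
    p K k * v ∈ reducedSpan K n := by
  refine mul_mem_reducedSpan (fun c a j hc ha => ?_) hv
  rcases apply_pos0_lt_or_apply_pos1_lt (wordPerm c) k with h | h
  · rw [← mul_assoc, ← mul_assoc, ← psiWord_cons]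
    exact monomial_mem_reducedSpan j (isReducedWord_cons_iff.2 ⟨hc, h⟩) ha
  obtain ⟨w, hw, hwc⟩ := exists_isReducedWord (wordPerm c * sw k)
  have hkw : IsReducedWord (k :: w) := isReducedWord_cons_iff.2 ⟨hw, by simpa [hwc] using h⟩
  have hc' : psiWord K c = p K k * psiWord K w := psiWord_eq_of_braidEquiv
    (braidEquiv_of_wordPerm_eq hc hkw (by simp [hwc, mul_assoc]))
  obtain ⟨d, -, s, -, hq⟩ := exists_p_mul_p_mul_e (K := K) k (permSeq (wordPerm w) j)
  have hD : (y K (pos1 k) - y K (pos0 k)) ^ d ∈ dotAlgebra K n :=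
    pow_mem (sub_mem (y_mem_dotAlgebra _) (y_mem_dotAlgebra _)) d
  obtain ⟨b, hb, hbw⟩ := exists_mul_psiWord_eq hD w
  suffices p K k * (psiWord K c * a * e K j) = s • (psiWord K w * (b * a) * e K j) by
    rw [this]
    exact Submodule.smul_mem _ _ (monomial_mem_reducedSpan j hw (mul_mem hb ha))
  calc p K k * (psiWord K c * a * e K j)
      = p K k * (p K k * e K (permSeq (wordPerm w) j)) * (psiWord K w * a * e K j) := by
        conv_lhs => rw [hc', mul_assoc (p K k), mul_assoc (p K k), psiWord_mul_mul_e_eq_e_mul ha w]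
        simp only [mul_assoc]
    _ = s • (psiWord K w * (b * a) * e K j) := by
        rw [hq, smul_mul_assoc, mul_assoc, ← psiWord_mul_mul_e_eq_e_mul ha, ← mul_assoc,
          ← mul_assoc, hbw]
        simp only [mul_assoc]

lemma mem_reducedSpan (x : CKLR K n) : x ∈ reducedSpan K n := by
  have h1 : (1 : CKLR K n) ∈ reducedSpan K n := by
    rw [← sum_e]
    refine Submodule.sum_mem _ fun j _ => ?_
    simpa using monomial_mem_reducedSpan (K := K) (c := []) j (by simp [IsReducedWord]) (one_mem _)
  obtain ⟨z, rfl⟩ : ∃ z, mk K n z = x := RingQuot.mkAlgHom_surjective K (Rel K n) x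
  suffices ∀ v ∈ reducedSpan K n, mk K n z * v ∈ reducedSpan K n by simpa using this 1 h1
  induction z using FreeAlgebra.induction with
  | grade0 r =>
    intro v hv
    rw [AlgHom.commutes, ← Algebra.smul_def]
    exact Submodule.smul_mem _ _ hv
  | grade1 g =>
    cases g with
    | e j => exact fun v => e_mul_mem_reducedSpan j
    | y l => exact fun v => y_mul_mem_reducedSpan l
    | psi k => exact fun v => p_mul_mem_reducedSpan k
  | mul a b iha ihb =>
    intro v hv
    rw [map_mul, mul_assoc]
    exact iha _ (ihb _ hv)
  | add a b iha ihb =>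
    intro v hv
    rw [map_add, add_mul]
    exact add_mem (iha v hv) (ihb v hv)

lemma eq_one_of_permSeq_eq {σ : Equiv.Perm (Fin n)} {i : KLRSeq n} (h : permSeq σ i = i) :
    σ = 1 :=
  Equiv.ext fun x => i.2.1 (congrFun (congrArg Subtype.val h) x)

lemma exists_mul_e_eq_e_mul_mul_e (i : KLRSeq n) (x : CKLR K n) :
    ∃ a ∈ dotAlgebra K n, a * e K i = e K i * x * e K i := by
  let T := (dotAlgebra K n).toSubmodule.map (LinearMap.mulRight K (e K i))
  have hT : reducedSpan K n ≤
      T.comap (LinearMap.mulLeft K (e K i) ∘ₗ LinearMap.mulRight K (e K i)) := by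
    refine Submodule.span_le.2 ?_
    rintro _ ⟨c, a, j, hc, ha, rfl⟩
    simp only [T, SetLike.mem_coe, Submodule.mem_comap, LinearMap.coe_comp, Function.comp_apply,
      LinearMap.mulRight_apply, LinearMap.mulLeft_apply, Submodule.mem_map,
      Subalgebra.mem_toSubmodule]
    by_cases hji : j = i
    · subst hji
      rw [mul_assoc _ (e K j), (isIdempotentElem_e j).eq, psiWord_mul_mul_e_eq_e_mul ha,
        ← mul_assoc, e_mul_e]
      split_ifs with h
      · rw [hc.eq_nil (eq_one_of_permSeq_eq h.symm)]
        refine ⟨a, ha, ?_⟩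
        rw [psiWord_nil, one_mul, ← mul_assoc, (commute_e_of_mem_dotAlgebra j ha).eq, mul_assoc,
          (isIdempotentElem_e j).eq]
      · exact ⟨0, zero_mem _, by rw [zero_mul, zero_mul]⟩
    · refine ⟨0, zero_mem _, ?_⟩
      rw [mul_assoc _ (e K j), e_mul_e_of_ne hji, mul_zero, mul_zero, zero_mul]
  obtain ⟨a, ha, h⟩ := hT (mem_reducedSpan x)
  exact ⟨a, ha, by simpa [mul_assoc] using h⟩

lemma exists_isNilpotent_e_mul_mul_e_sub_smul (i : KLRSeq n) (x : CKLR K n) :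
    ∃ c : K, IsNilpotent (e K i * x * e K i - c • e K i) := by
  obtain ⟨a, ha, hx⟩ := exists_mul_e_eq_e_mul_mul_e i x
  obtain ⟨c, hc⟩ := exists_isNilpotent_sub_algebraMap ha
  refine ⟨c, ?_⟩
  rw [← hx, Algebra.smul_def, ← sub_mul]
  exact (commute_e_of_mem_dotAlgebra i (sub_mem ha (Subalgebra.algebraMap_mem _ c))).symm
    |>.isNilpotent_mul_right hc

end Algebra

end KLR

theorem stmt_1_general (K : Type) [Field K] (n : ℕ) :
    (∀ i : KLRSeq n, IsIdempotentElem (KLR.e K i)) ∧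
    (∀ i j : KLRSeq n, i ≠ j → KLR.e K i * KLR.e K j = 0) ∧
    (∑ i : KLRSeq n, KLR.e K i) = 1 ∧
    (∀ i : KLRSeq n, KLR.e K i ≠ 0 →
      ¬ ∃ f₁ f₂ : CKLR K n, f₁ ≠ 0 ∧ f₂ ≠ 0 ∧ IsIdempotentElem f₁ ∧ IsIdempotentElem f₂ ∧
        f₁ * f₂ = 0 ∧ f₂ * f₁ = 0 ∧ KLR.e K i = f₁ + f₂) :=
  ⟨KLR.isIdempotentElem_e, fun _ _ => KLR.e_mul_e_of_ne, KLR.sum_e, fun i _ =>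
    (KLR.isIdempotentElem_e i).not_exists_orthogonal_sum
      (KLR.exists_isNilpotent_e_mul_mul_e_sub_smul i)⟩

/-- for `n ≥ 2`, the elements `e(i)` form a complete set of primitive
pairwise orthogonal idempotents of `R_n`: each `e(i)` is idempotent, they are pairwise
orthogonal, they sum to `1`, and every nonzero `e(i)` is primitive (not a sum of two
nonzero orthogonal idempotents). -/
theorem stmt_1 (K : Type) [Field K] (n : ℕ) (hn : 2 ≤ n) :
    (∀ i : KLRSeq n, IsIdempotentElem (KLR.e K i)) ∧
    (∀ i j : KLRSeq n, i ≠ j → KLR.e K i * KLR.e K j = 0) ∧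
    (∑ i : KLRSeq n, KLR.e K i) = 1 ∧
    (∀ i : KLRSeq n, KLR.e K i ≠ 0 →
      ¬ ∃ f₁ f₂ : CKLR K n, f₁ ≠ 0 ∧ f₂ ≠ 0 ∧ IsIdempotentElem f₁ ∧ IsIdempotentElem f₂ ∧
        f₁ * f₂ = 0 ∧ f₂ * f₁ = 0 ∧ KLR.e K i = f₁ + f₂) :=
  stmt_1_general K n
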